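/- Fix λ ∈ ℤ. Each of the three alternating bilinear forms on 𝔴_λ determined on basis elements by γ_LL(L_n, L_m) = (1/12) n(n²−1) δ_{n+m,0}, γ_LD(L_n, D_m) = (1/2) n(n+1) δ_{n+m,0}, and γ_DD(D_n, D_m) = n δ_{n+m,0} (each extended by zero on all other pairs of basis elements and by antisymmetry) is a 2-cocycle on 𝔴_λ with values in the trivial module ℝ: it satisfies γ([X,Y],Z) + γ([Y,Z],X) + γ([Z,X],Y) = 0 for all X, Y, Z ∈ 𝔴_λ. -/

import Mathlib

/-! The cyclic sum `γ([X,Y],Z) + γ([Y,Z],X) + γ([Z,X],Y)` is trilinear and invariant under cyclic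
permutation of `X, Y, Z`, so it vanishes identically once it vanishes on triples of basis vectors.
On `(a_n, b_m, c_k)` every term carries the factor `δ_{n+m+k,0}`, since the bracket is graded and
each `γ` pairs degrees `n` and `-n`; after substituting `k = -n-m` what is left is a polynomial
identity in `n` and `m`. -/

/-- Basis labels for the centreless Weyl λ-BMS algebra. -/
inductive WGen : Type
  | L : ℤ → WGen
  | D : ℤ → WGen
  | P : ℤ → WGen

/-- The bracket on basis elements of the centreless Weyl λ-BMS algebra. -/
noncomputable def wbGen (lam : ℤ) : WGen → WGen → (WGen →₀ ℝ)
  | WGen.L n, WGen.L m => ((n : ℝ) - m) • Finsupp.single (WGen.L (n + m)) 1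
  | WGen.L n, WGen.D m => (-(m : ℝ)) • Finsupp.single (WGen.D (n + m)) 1
  | WGen.D m, WGen.L n => ((m : ℝ)) • Finsupp.single (WGen.D (n + m)) 1
  | WGen.L n, WGen.P m => (-((m : ℝ) + (lam : ℝ) * n)) • Finsupp.single (WGen.P (n + m)) 1
  | WGen.P m, WGen.L n => (((m : ℝ) + (lam : ℝ) * n)) • Finsupp.single (WGen.P (n + m)) 1
  | WGen.D n, WGen.P m => Finsupp.single (WGen.P (n + m)) 1
  | WGen.P m, WGen.D n => -(Finsupp.single (WGen.P (n + m)) 1)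
  | _, _ => 0

/-- The bilinear extension of `wbGen` to the free real vector space on `WGen`. -/
noncomputable def wbr (lam : ℤ) (x y : WGen →₀ ℝ) : WGen →₀ ℝ :=
  x.sum fun gx cx => y.sum fun gy cy => (cx * cy) • wbGen lam gx gy

/-- `γ_LL(L_n, L_m) = (1/12) n(n²-1) δ_{n+m,0}`, zero on other basis pairs. -/
noncomputable def gLL : WGen → WGen → ℝ
  | WGen.L n, WGen.L m => if n + m = 0 then (1 / 12 : ℝ) * n * ((n : ℝ) ^ 2 - 1) else 0
  | _, _ => 0

/-- `γ_LD(L_n, D_m) = (1/2) n(n+1) δ_{n+m,0}`, extended antisymmetrically,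
zero on other basis pairs. -/
noncomputable def gLD : WGen → WGen → ℝ
  | WGen.L n, WGen.D m => if n + m = 0 then (1 / 2 : ℝ) * n * ((n : ℝ) + 1) else 0
  | WGen.D m, WGen.L n => if n + m = 0 then -((1 / 2 : ℝ) * n * ((n : ℝ) + 1)) else 0
  | _, _ => 0

/-- `γ_DD(D_n, D_m) = n δ_{n+m,0}`, zero on other basis pairs. -/
noncomputable def gDD : WGen → WGen → ℝ
  | WGen.D n, WGen.D m => if n + m = 0 then (n : ℝ) else 0
  | _, _ => 0

/-- The bilinear extension of a form on basis elements to `WGen →₀ ℝ`. -/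
noncomputable def cExt (γ : WGen → WGen → ℝ) (x y : WGen →₀ ℝ) : ℝ :=
  x.sum fun gx cx => y.sum fun gy cy => cx * cy * γ gx gy

namespace Finsupp

variable {α R M : Type*} [CommSemiring R] [AddCommMonoid M] [Module R M]

noncomputable def linearCombination₂ (F : α → α → M) : (α →₀ R) →ₗ[R] (α →₀ R) →ₗ[R] M :=
  linearCombination R fun a => linearCombination R (F a)

theorem linearCombination₂_apply (F : α → α → M) (x y : α →₀ R) :
    linearCombination₂ F x y = x.sum fun a r => y.sum fun b s => (r * s) • F a b := by
  simp [linearCombination₂, linearCombination_apply, LinearMap.finsupp_sum_apply, smul_sum,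
    mul_smul]

@[simp]
theorem linearCombination₂_single_single (F : α → α → M) (a b : α) (r s : R) :
    linearCombination₂ F (single a r) (single b s) = (r * s) • F a b := by
  simp [linearCombination₂_apply]

end Finsupp

theorem Module.Basis.cyclic_sum_eq_zero {ι R V M : Type*} [CommSemiring R] [AddCommMonoid V]
    [Module R V] [AddCommMonoid M] [Module R M] (b : Module.Basis ι R V)
    (B : V →ₗ[R] V →ₗ[R] M) (μ : V →ₗ[R] V →ₗ[R] V)
    (h : ∀ i j k, B (μ (b i) (b j)) (b k) + B (μ (b j) (b k)) (b i) + B (μ (b k) (b i)) (b j) = 0)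
    (x y z : V) : B (μ x y) z + B (μ y z) x + B (μ z x) y = 0 := by
  have cycle : ∀ x y z, B (μ x y) z + B (μ y z) x + B (μ z x) y =
      B (μ y z) x + B (μ z x) y + B (μ x y) z := fun x y z => by abel
  have extend : ∀ y z, (∀ i, B (μ (b i) y) z + B (μ y z) (b i) + B (μ z (b i)) y = 0) →
      ∀ x, B (μ x y) z + B (μ y z) x + B (μ z x) y = 0 := by
    intro y z hb x
    have : B.flip z ∘ₗ μ.flip y + B (μ y z) + B.flip y ∘ₗ μ z = 0 :=
      b.ext fun i => by simpa using hb i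
    simpa using LinearMap.congr_fun this x
  refine extend y z (fun i => ?_) x
  rw [cycle]
  refine extend z (b i) (fun j => ?_) y
  rw [cycle]
  refine extend (b i) (b j) (fun k => ?_) z
  rw [cycle]
  exact h i j k

theorem cExt_eq_linearCombination₂ (γ : WGen → WGen → ℝ) (x y : WGen →₀ ℝ) :
    cExt γ x y = Finsupp.linearCombination₂ γ x y := by
  simp [cExt, Finsupp.linearCombination₂_apply]

theorem wbr_eq_linearCombination₂ (lam : ℤ) (x y : WGen →₀ ℝ) :
    wbr lam x y = Finsupp.linearCombination₂ (wbGen lam) x y :=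
  (Finsupp.linearCombination₂_apply _ x y).symm

theorem cyclic_sum_wbGen_eq_zero (lam : ℤ) {γ : WGen → WGen → ℝ}
    (hγ : γ ∈ ({gLL, gLD, gDD} : Set (WGen → WGen → ℝ))) (a b c : WGen) :
    Finsupp.linearCombination₂ γ (wbGen lam a b) (Finsupp.single c 1) +
      Finsupp.linearCombination₂ γ (wbGen lam b c) (Finsupp.single a 1) +
      Finsupp.linearCombination₂ γ (wbGen lam c a) (Finsupp.single b 1) = 0 := by
  rcases hγ with rfl | rfl | rfl <;>
    rcases a with n | n | n <;> rcases b with m | m | m <;> rcases c with k | k | k <;>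
    simp only [wbGen, gLL, gLD, gDD, map_smul, map_neg, map_zero, LinearMap.smul_apply,
      LinearMap.neg_apply, LinearMap.zero_apply, Finsupp.linearCombination₂_single_single,
      smul_eq_mul, one_mul, mul_ite, mul_zero, neg_zero, add_zero] <;>
    (try split_ifs) <;>
    first
    | ring1
    | (exfalso; omega)
    | (obtain rfl : k = -n - m := by omega
       push_cast; ring1)

theorem cExt_cyclic_sum_eq_zero (lam : ℤ) {γ : WGen → WGen → ℝ}
    (hγ : γ ∈ ({gLL, gLD, gDD} : Set (WGen → WGen → ℝ))) (x y z : WGen →₀ ℝ) :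
    cExt γ (wbr lam x y) z + cExt γ (wbr lam y z) x + cExt γ (wbr lam z x) y = 0 := by
  simp only [cExt_eq_linearCombination₂, wbr_eq_linearCombination₂]
  refine Finsupp.basisSingleOne.cyclic_sum_eq_zero _ _ (fun a b c => ?_) x y z
  simpa using cyclic_sum_wbGen_eq_zero lam hγ a b c

/-- Fix `λ ∈ ℤ`.  Each of the bilinear forms `γ_LL`, `γ_LD`, `γ_DD` is a
2-cocycle on the centreless Weyl λ-BMS algebra `𝔴_λ` with values in the trivial
module `ℝ`: it satisfies `γ([X,Y],Z) + γ([Y,Z],X) + γ([Z,X],Y) = 0`. -/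
theorem weyl_lambda_bms_two_cocycles (lam : ℤ) :
    (∀ x y z : WGen →₀ ℝ,
      cExt gLL (wbr lam x y) z + cExt gLL (wbr lam y z) x + cExt gLL (wbr lam z x) y = 0) ∧
    (∀ x y z : WGen →₀ ℝ,
      cExt gLD (wbr lam x y) z + cExt gLD (wbr lam y z) x + cExt gLD (wbr lam z x) y = 0) ∧
    (∀ x y z : WGen →₀ ℝ,
      cExt gDD (wbr lam x y) z + cExt gDD (wbr lam y z) x + cExt gDD (wbr lam z x) y = 0) :=
  ⟨cExt_cyclic_sum_eq_zero lam (by simp), cExt_cyclic_sum_eq_zero lam (by simp),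
    cExt_cyclic_sum_eq_zero lam (by simp)⟩
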